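/- (Monotone convergence theorem) Let A ∈ ℝ^{n×n} be K-nonnegative (A ≥_K 0) and K-monotone, let A = U − V be a K-regular splitting and U = F − G a K-weak regular splitting of type II with V F⁻¹ G = G F⁻¹ V, let s ≥ 1 be an integer, and let b ∈ ℝ^n. Suppose x₀, y₀ ∈ ℝ^n satisfy x₁ ≥_K x₀, y₀ ≥_K y₁, and y₀ ≥_K A⁻¹b ≥_K x₀, where the sequences are generated by x_{k+1} = T_s x_k + Q_s b and y_{k+1} = T_s y_k + Q_s b. Then: (i) y_k ≥_K y_{k+1} ≥_K x_{k+1} ≥_K x_k for all k ≥ 0; (ii) both (x_k) and (y_k) converge to A⁻¹ b, and y_k ≥_K y_{k+1} ≥_K A⁻¹b ≥_K x_{k+1} ≥_K x_k for all k ≥ 0. -/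

import Mathlib

open Matrix Finset Filter

/-- A proper cone in `ℝ^n`: a closed, pointed, solid convex cone. -/
def IsProperCone {n : ℕ} (K : Set (Fin n → ℝ)) : Prop :=
  IsClosed K ∧ Convex ℝ K ∧ (∀ c : ℝ, 0 ≤ c → ∀ x ∈ K, c • x ∈ K) ∧
    K ∩ (-K) = {0} ∧ (interior K).Nonempty

/-- `M ≥_K 0`: the matrix `M` leaves the cone `K` invariant. -/
def KNonneg {n : ℕ} (K : Set (Fin n → ℝ)) (M : Matrix (Fin n) (Fin n) ℝ) : Prop :=
  ∀ x ∈ K, M.mulVec x ∈ K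

/-- Spectral radius: the supremum of the moduli of the complex eigenvalues. -/
noncomputable def specRad {n : ℕ} (M : Matrix (Fin n) (Fin n) ℝ) : ℝ :=
  sSup ((fun z : ℂ => ‖z‖) '' spectrum ℂ (M.map Complex.ofReal))

/-- `A = U - V` is a `K`-regular splitting. -/
def KRegularSplitting {n : ℕ} (K : Set (Fin n → ℝ))
    (A U V : Matrix (Fin n) (Fin n) ℝ) : Prop :=
  A = U - V ∧ IsUnit U ∧ KNonneg K U⁻¹ ∧ KNonneg K V

/-- `A = U - V` is a `K`-weak regular splitting of type I. -/
def KWeakRegularSplittingI {n : ℕ} (K : Set (Fin n → ℝ))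
    (A U V : Matrix (Fin n) (Fin n) ℝ) : Prop :=
  A = U - V ∧ IsUnit U ∧ KNonneg K U⁻¹ ∧ KNonneg K (U⁻¹ * V)

/-- `A = U - V` is a `K`-weak regular splitting of type II. -/
def KWeakRegularSplittingII {n : ℕ} (K : Set (Fin n → ℝ))
    (A U V : Matrix (Fin n) (Fin n) ℝ) : Prop :=
  A = U - V ∧ IsUnit U ∧ KNonneg K U⁻¹ ∧ KNonneg K (V * U⁻¹)

/-- `A` is `K`-monotone: invertible with `A⁻¹ ≥_K 0`. -/
def KMonotone {n : ℕ} (K : Set (Fin n → ℝ)) (A : Matrix (Fin n) (Fin n) ℝ) : Prop :=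
  IsUnit A ∧ KNonneg K A⁻¹

/-- Two-stage iteration matrix `T_s = (F⁻¹G)^s + Σ_{j=0}^{s-1} (F⁻¹G)^j F⁻¹ V`. -/
noncomputable def twoStageT {n : ℕ} (F G V : Matrix (Fin n) (Fin n) ℝ) (s : ℕ) :
    Matrix (Fin n) (Fin n) ℝ :=
  (F⁻¹ * G) ^ s + (∑ j ∈ Finset.range s, (F⁻¹ * G) ^ j) * (F⁻¹ * V)

/-- `T̂_s = (GF⁻¹)^s + Σ_{j=0}^{s-1} (GF⁻¹)^j V F⁻¹`. -/
noncomputable def twoStageThat {n : ℕ} (F G V : Matrix (Fin n) (Fin n) ℝ) (s : ℕ) :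
    Matrix (Fin n) (Fin n) ℝ :=
  (G * F⁻¹) ^ s + (∑ j ∈ Finset.range s, (G * F⁻¹) ^ j) * (V * F⁻¹)

/-- `Q_s = Σ_{j=0}^{s-1} (F⁻¹G)^j F⁻¹`. -/
noncomputable def twoStageQ {n : ℕ} (F G : Matrix (Fin n) (Fin n) ℝ) (s : ℕ) :
    Matrix (Fin n) (Fin n) ℝ :=
  (∑ j ∈ Finset.range s, (F⁻¹ * G) ^ j) * F⁻¹

/-!
With `U = F - G` and `A = U - V` one has `T_s = I - Q_s A` and `Q_s = U⁻¹ (I - (G F⁻¹)^s)`, so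
`T_s = U⁻¹ V + U⁻¹ (G F⁻¹)^s A` is `K`-nonnegative and `A⁻¹ b` is a fixed point of the
iteration. The iteration therefore preserves `≤_K`: `(x_k)` increases, `(y_k)` decreases, and
both are sandwiched by `A⁻¹ b`. A proper cone is normal, so such monotone, order-bounded
sequences converge, and their limits are fixed points. The gap `d ≥_K 0` between a limit and
`A⁻¹ b` is then a `K`-nonnegative fixed vector of `T_s`, i.e. `Q_s A d = 0`; since
`F Q_s = Σ_j (G F⁻¹)^j` has leading term `I` and `K`-nonnegative remaining terms, `A d = 0`.
-/

open Topology

namespace IsProperCone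

variable {n : ℕ} {K : Set (Fin n → ℝ)}

theorem smul_mem (hK : IsProperCone K) {c : ℝ} (hc : 0 ≤ c) {x : Fin n → ℝ} (hx : x ∈ K) :
    c • x ∈ K :=
  hK.2.2.1 c hc x hx

theorem eq_zero_of_mem_of_neg_mem (hK : IsProperCone K) {x : Fin n → ℝ} (hx : x ∈ K)
    (hnx : -x ∈ K) : x = 0 := by
  have h : x ∈ K ∩ -K := ⟨hx, hnx⟩
  rwa [hK.2.2.2.1] at h

theorem zero_mem (hK : IsProperCone K) : (0 : Fin n → ℝ) ∈ K :=
  (hK.2.2.2.1.symm.subset rfl).1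

theorem add_mem (hK : IsProperCone K) {x y : Fin n → ℝ} (hx : x ∈ K) (hy : y ∈ K) :
    x + y ∈ K := by
  have hmid : (1 / 2 : ℝ) • x + (1 / 2 : ℝ) • y ∈ K :=
    hK.2.1 hx hy (by norm_num) (by norm_num) (by norm_num)
  convert hK.smul_mem (c := 2) (by norm_num) hmid using 1
  module

theorem sum_mem (hK : IsProperCone K) {ι : Type*} {t : Finset ι} {f : ι → Fin n → ℝ}
    (h : ∀ i ∈ t, f i ∈ K) : ∑ i ∈ t, f i ∈ K :=
  Finset.sum_induction f (· ∈ K) (fun _ _ => hK.add_mem) hK.zero_mem h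

theorem sub_mem_of_forall_succ_sub_mem (hK : IsProperCone K) {z : ℕ → Fin n → ℝ}
    (hz : ∀ k, z (k + 1) - z k ∈ K) {k m : ℕ} (hkm : k ≤ m) : z m - z k ∈ K := by
  induction m, hkm using Nat.le_induction with
  | base => simpa using hK.zero_mem
  | succ m _ ih => simpa using hK.add_mem (hz m) ih

-- Normality of `K`: the compact set `K ∩ sphere 0 1` lies at positive distance from `-K`.
theorem exists_norm_le_mul_norm (hK : IsProperCone K) :
    ∃ γ : ℝ, ∀ a b : Fin n → ℝ, a ∈ K → b - a ∈ K → ‖a‖ ≤ γ * ‖b‖ := by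
  have hdisj : Disjoint (K ∩ Metric.sphere 0 1) (-K) := by
    refine Set.disjoint_left.2 fun u hu hnu => ?_
    have : u = 0 := hK.eq_zero_of_mem_of_neg_mem hu.1 hnu
    simp [this] at hu
  obtain ⟨r, hr, hsep⟩ := Metric.exists_pos_forall_lt_edist
    ((isCompact_sphere 0 1).inter_left hK.1) hK.1.neg hdisj
  refine ⟨(r : ℝ)⁻¹, fun a b ha hba => ?_⟩
  rcases eq_or_ne a 0 with rfl | ha0
  · simp only [norm_zero]; positivity
  have hna : 0 < ‖a‖ := norm_pos_iff.2 ha0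
  have := hsep (‖a‖⁻¹ • a) ⟨hK.smul_mem (by positivity) ha, by simp [norm_smul, hna.ne']⟩
    (-(‖a‖⁻¹ • (b - a))) (by simpa using hK.smul_mem (inv_nonneg.2 hna.le) hba)
  have hdist : dist (‖a‖⁻¹ • a) (-(‖a‖⁻¹ • (b - a))) = ‖a‖⁻¹ * ‖b‖ := by
    rw [dist_eq_norm, sub_neg_eq_add, ← smul_add, add_sub_cancel, norm_smul, norm_inv, norm_norm]
  rw [edist_dist, hdist, ENNReal.coe_lt_ofReal, lt_inv_mul_iff₀ hna] at this
  rw [le_inv_mul_iff₀ (NNReal.coe_pos.2 hr), mul_comm]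
  exact this.le

theorem exists_tendsto_of_forall_succ_sub_mem (hK : IsProperCone K) {z : ℕ → Fin n → ℝ}
    {w : Fin n → ℝ} (hz : ∀ k, z (k + 1) - z k ∈ K) (hw : ∀ k, w - z k ∈ K) :
    ∃ L, Tendsto z atTop (𝓝 L) := by
  obtain ⟨γ, hγ⟩ := hK.exists_norm_le_mul_norm
  have hball : ∀ k, z k ∈ Metric.closedBall (z 0) (γ * ‖w - z 0‖) := fun k => by
    rw [Metric.mem_closedBall, dist_eq_norm]
    exact hγ _ _ (hK.sub_mem_of_forall_succ_sub_mem hz k.zero_le) (by simpa using hw k)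
  have hcompact := isCompact_closedBall (z 0) (γ * ‖w - z 0‖)
  -- every cluster point is an upper bound, so any two cluster points dominate each other
  have hupper : ∀ L, MapClusterPt L atTop z → ∀ k, L - z k ∈ K := fun L hL k =>
    (hK.1.preimage (continuous_sub_right (z k))).mem_of_mapClusterPt hL
      (eventually_ge_atTop k |>.mono fun m hm => hK.sub_mem_of_forall_succ_sub_mem hz hm)
  have hle : ∀ L L', MapClusterPt L atTop z → MapClusterPt L' atTop z → L - L' ∈ K :=
    fun L L' hL hL' => (hK.1.preimage (continuous_sub_left L)).mem_of_mapClusterPt hL'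
      (Eventually.of_forall (hupper L hL))
  obtain ⟨L, -, hL⟩ := hcompact.exists_mapClusterPt (f := atTop)
    (tendsto_principal.2 (Eventually.of_forall hball))
  refine ⟨L, hcompact.tendsto_nhds_of_unique_mapClusterPt (Eventually.of_forall hball)
    fun L' _ hL' => ?_⟩
  rw [← sub_eq_zero]
  exact hK.eq_zero_of_mem_of_neg_mem (hle L' L hL' hL) (by simpa using hle L L' hL hL')

end IsProperCone

namespace KNonneg

variable {n : ℕ} {K : Set (Fin n → ℝ)} {M N : Matrix (Fin n) (Fin n) ℝ}

theorem mul (hM : KNonneg K M) (hN : KNonneg K N) : KNonneg K (M * N) := fun x hx => by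
  rw [← mulVec_mulVec]
  exact hM _ (hN x hx)

theorem add (hK : IsProperCone K) (hM : KNonneg K M) (hN : KNonneg K N) : KNonneg K (M + N) :=
  fun x hx => by
    rw [add_mulVec]
    exact hK.add_mem (hM x hx) (hN x hx)

theorem pow (hM : KNonneg K M) (j : ℕ) : KNonneg K (M ^ j) := by
  induction j with
  | zero => simp [KNonneg]
  | succ j ih => rw [pow_succ]; exact ih.mul hM

variable {T : Matrix (Fin n) (Fin n) ℝ} {c : Fin n → ℝ}

theorem sub_mem_of_iterate (hT : KNonneg K T) {u v : ℕ → Fin n → ℝ}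
    (hu : ∀ k, u (k + 1) = T *ᵥ u k + c) (hv : ∀ k, v (k + 1) = T *ᵥ v k + c)
    (h₀ : u 0 - v 0 ∈ K) (k : ℕ) : u k - v k ∈ K := by
  induction k with
  | zero => exact h₀
  | succ k ih =>
    rw [hu, hv, add_sub_add_right_eq_sub, ← mulVec_sub]
    exact hT _ ih

theorem tendsto_of_monotone_iterate (hT : KNonneg K T) (hK : IsProperCone K)
    (hfix : ∀ d ∈ K, T *ᵥ d = d → d = 0) {z : Fin n → ℝ} (hz : T *ᵥ z + c = z)
    {x : ℕ → Fin n → ℝ} (hx : ∀ k, x (k + 1) = T *ᵥ x k + c) (h₁ : x 1 - x 0 ∈ K)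
    (h₀ : z - x 0 ∈ K) : Tendsto x atTop (𝓝 z) := by
  have hbound := hT.sub_mem_of_iterate (u := fun _ => z) (fun _ => hz.symm) hx h₀
  obtain ⟨L, hL⟩ := hK.exists_tendsto_of_forall_succ_sub_mem
    (hT.sub_mem_of_iterate (fun k => hx (k + 1)) hx h₁) hbound
  have hLfix : T *ᵥ L + c = L := by
    refine tendsto_nhds_unique ?_ (hL.comp (tendsto_add_atTop_nat 1))
    simp_rw [Function.comp_def, hx]
    exact ((continuous_const.matrix_mulVec continuous_id).tendsto L).comp hL |>.add_const c
  have hzL : z - L ∈ K := hK.1.mem_of_tendsto (tendsto_const_nhds.sub hL) (.of_forall hbound)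
  have hTzL : T *ᵥ (z - L) = z - L := by
    conv_rhs => rw [← hz, ← hLfix]
    rw [mulVec_sub, add_sub_add_right_eq_sub]
  rw [← sub_eq_zero.1 (hfix _ hzL hTzL)] at hL
  exact hL

theorem tendsto_of_antitone_iterate (hT : KNonneg K T) (hK : IsProperCone K)
    (hfix : ∀ d ∈ K, T *ᵥ d = d → d = 0) {z : Fin n → ℝ} (hz : T *ᵥ z + c = z)
    {y : ℕ → Fin n → ℝ} (hy : ∀ k, y (k + 1) = T *ᵥ y k + c) (h₁ : y 0 - y 1 ∈ K)
    (h₀ : y 0 - z ∈ K) : Tendsto y atTop (𝓝 z) := by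
  have := hT.tendsto_of_monotone_iterate hK hfix (c := -c) (z := -z) (x := -y)
    (by rw [mulVec_neg, ← neg_add, hz]) (fun k => by simp only [Pi.neg_apply, hy, mulVec_neg, neg_add])
    (by simpa only [Pi.neg_apply, neg_sub_neg] using h₁)
    (by simpa only [Pi.neg_apply, neg_sub_neg] using h₀)
  simpa using this.neg

end KNonneg

section TwoStage

variable {n : ℕ} {F G V : Matrix (Fin n) (Fin n) ℝ} {s : ℕ}

theorem mul_twoStageQ (hF : IsUnit F) :
    F * twoStageQ F G s = ∑ j ∈ range s, (G * F⁻¹) ^ j := by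
  have hFd := (isUnit_iff_isUnit_det F).1 hF
  have hconj : SemiconjBy F (F⁻¹ * G) (G * F⁻¹) := by
    rw [SemiconjBy, ← mul_assoc, mul_nonsing_inv F hFd, one_mul, mul_assoc,
      nonsing_inv_mul F hFd, mul_one]
  rw [twoStageQ, ← mul_assoc, mul_sum, sum_mul]
  refine sum_congr rfl fun j _ => ?_
  rw [(hconj.pow_right j).eq, mul_assoc, mul_nonsing_inv F hFd, mul_one]

theorem twoStageQ_mul_sub (hF : IsUnit F) :
    twoStageQ F G s * (F - G) = 1 - (F⁻¹ * G) ^ s := by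
  rw [twoStageQ, mul_assoc, mul_sub, nonsing_inv_mul F ((isUnit_iff_isUnit_det F).1 hF),
    geom_sum_mul_neg]

theorem sub_mul_twoStageQ (hF : IsUnit F) :
    (F - G) * twoStageQ F G s = 1 - (G * F⁻¹) ^ s := by
  have hFG : F - G = (1 - G * F⁻¹) * F := by
    rw [sub_mul, one_mul, mul_assoc, nonsing_inv_mul F ((isUnit_iff_isUnit_det F).1 hF), mul_one]
  rw [hFG, mul_assoc, mul_twoStageQ hF, mul_neg_geom_sum]

theorem twoStageT_eq_one_sub (hF : IsUnit F) :
    twoStageT F G V s = 1 - twoStageQ F G s * (F - G - V) := by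
  rw [mul_sub, twoStageQ_mul_sub hF, twoStageT, twoStageQ, mul_assoc]
  abel

theorem twoStageT_eq (hF : IsUnit F) (hU : IsUnit (F - G)) :
    twoStageT F G V s = (F - G)⁻¹ * V + (F - G)⁻¹ * ((G * F⁻¹) ^ s * (F - G - V)) := by
  have hUd := (isUnit_iff_isUnit_det (F - G)).1 hU
  have hQ : twoStageQ F G s = (F - G)⁻¹ * (1 - (G * F⁻¹) ^ s) := by
    rw [← sub_mul_twoStageQ hF, nonsing_inv_mul_cancel_left _ _ hUd]
  rw [twoStageT_eq_one_sub hF, hQ]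
  calc 1 - (F - G)⁻¹ * (1 - (G * F⁻¹) ^ s) * (F - G - V)
      = 1 - (F - G)⁻¹ * (F - G) + (F - G)⁻¹ * V + (F - G)⁻¹ * ((G * F⁻¹) ^ s * (F - G - V)) := by
        noncomm_ring
    _ = _ := by rw [nonsing_inv_mul _ hUd, sub_self, zero_add]

theorem knonneg_twoStageT {K : Set (Fin n → ℝ)} (hK : IsProperCone K) (hF : IsUnit F)
    (hU : IsUnit (F - G)) (hUinv : KNonneg K (F - G)⁻¹) (hV : KNonneg K V)
    (hGF : KNonneg K (G * F⁻¹)) (hA : KNonneg K (F - G - V)) :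
    KNonneg K (twoStageT F G V s) := by
  rw [twoStageT_eq hF hU]
  exact (hUinv.mul hV).add hK (hUinv.mul ((hGF.pow s).mul hA))

-- The leading term of `F * Q_s` is the identity and the other terms are `K`-nonnegative.
theorem eq_zero_of_twoStageQ_mulVec_eq_zero {K : Set (Fin n → ℝ)} (hK : IsProperCone K)
    (hF : IsUnit F) (hGF : KNonneg K (G * F⁻¹)) (hs : 1 ≤ s) {e : Fin n → ℝ} (he : e ∈ K)
    (hQe : twoStageQ F G s *ᵥ e = 0) : e = 0 := by
  obtain ⟨t, rfl⟩ : ∃ t, s = t + 1 := ⟨s - 1, by omega⟩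
  have hsum : ∑ j ∈ range t, (G * F⁻¹) ^ (j + 1) *ᵥ e + e = 0 :=
    calc _ = (F * twoStageQ F G (t + 1)) *ᵥ e := by
          rw [mul_twoStageQ hF, sum_mulVec, sum_range_succ', pow_zero, one_mulVec]
      _ = 0 := by rw [← mulVec_mulVec, hQe, mulVec_zero]
  refine hK.eq_zero_of_mem_of_neg_mem he ?_
  rw [← eq_neg_of_add_eq_zero_left hsum]
  exact hK.sum_mem fun j _ => hGF.pow (j + 1) e he

end TwoStage

theorem stmt_17_general {n : ℕ} (K : Set (Fin n → ℝ)) (hK : IsProperCone K)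
    (A U V F G : Matrix (Fin n) (Fin n) ℝ)
    (hAnonneg : KNonneg K A) (hmono : KMonotone K A)
    (houter : KRegularSplitting K A U V)
    (hinner : KWeakRegularSplittingII K U F G)
    (s : ℕ) (hs : 1 ≤ s) (b : Fin n → ℝ)
    (x y : ℕ → Fin n → ℝ)
    (hx : ∀ k, x (k + 1) = (twoStageT F G V s).mulVec (x k) + (twoStageQ F G s).mulVec b)
    (hy : ∀ k, y (k + 1) = (twoStageT F G V s).mulVec (y k) + (twoStageQ F G s).mulVec b)
    (h₁ : x 1 - x 0 ∈ K) (h₂ : y 0 - y 1 ∈ K)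
    (h₃ : y 0 - A⁻¹.mulVec b ∈ K) (h₄ : A⁻¹.mulVec b - x 0 ∈ K) :
    (∀ k, y k - y (k + 1) ∈ K ∧ y (k + 1) - x (k + 1) ∈ K ∧ x (k + 1) - x k ∈ K) ∧
    Filter.Tendsto x Filter.atTop (nhds (A⁻¹.mulVec b)) ∧
    Filter.Tendsto y Filter.atTop (nhds (A⁻¹.mulVec b)) ∧
    (∀ k, y (k + 1) - A⁻¹.mulVec b ∈ K ∧ A⁻¹.mulVec b - x (k + 1) ∈ K) := by
  obtain ⟨hA, -⟩ := hmono
  obtain ⟨rfl, hU, hUinv, hV⟩ := houter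
  obtain ⟨rfl, hF, -, hGF⟩ := hinner
  have hT : KNonneg K (twoStageT F G V s) := knonneg_twoStageT hK hF hU hUinv hV hGF hAnonneg
  have hfix : ∀ d ∈ K, twoStageT F G V s *ᵥ d = d → d = 0 := fun d hd hTd => by
    rw [twoStageT_eq_one_sub hF, sub_mulVec, one_mulVec, sub_eq_self, ← mulVec_mulVec] at hTd
    refine mulVec_injective_iff_isUnit.2 hA ?_
    rw [eq_zero_of_twoStageQ_mulVec_eq_zero hK hF hGF hs (hAnonneg d hd) hTd, mulVec_zero]
  have hz : twoStageT F G V s *ᵥ ((F - G - V)⁻¹ *ᵥ b) + twoStageQ F G s *ᵥ b =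
      (F - G - V)⁻¹ *ᵥ b := by
    rw [twoStageT_eq_one_sub hF, sub_mulVec, one_mulVec, ← mulVec_mulVec, mulVec_mulVec b,
      mul_nonsing_inv _ ((isUnit_iff_isUnit_det _).1 hA), one_mulVec, sub_add_cancel]
  have hxz := hT.sub_mem_of_iterate (u := fun _ => _) (fun _ => hz.symm) hx h₄
  have hyz := hT.sub_mem_of_iterate (v := fun _ => _) hy (fun _ => hz.symm) h₃
  have hxmono := hT.sub_mem_of_iterate (u := fun k => x (k + 1)) (fun k => hx (k + 1)) hx h₁
  have hymono := hT.sub_mem_of_iterate (v := fun k => y (k + 1)) hy (fun k => hy (k + 1)) h₂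
  refine ⟨fun k => ⟨hymono k, ?_, hxmono k⟩,
    hT.tendsto_of_monotone_iterate hK hfix hz hx h₁ h₄,
    hT.tendsto_of_antitone_iterate hK hfix hz hy h₂ h₃, fun k => ⟨hyz (k + 1), hxz (k + 1)⟩⟩
  simpa using hK.add_mem (hyz (k + 1)) (hxz (k + 1))

theorem stmt_17 {n : ℕ} (K : Set (Fin n → ℝ)) (hK : IsProperCone K)
    (A U V F G : Matrix (Fin n) (Fin n) ℝ)
    (hAnonneg : KNonneg K A) (hmono : KMonotone K A)
    (houter : KRegularSplitting K A U V)
    (hinner : KWeakRegularSplittingII K U F G)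
    (hcomm : V * F⁻¹ * G = G * F⁻¹ * V)
    (s : ℕ) (hs : 1 ≤ s) (b : Fin n → ℝ)
    (x y : ℕ → Fin n → ℝ)
    (hx : ∀ k, x (k + 1) = (twoStageT F G V s).mulVec (x k) + (twoStageQ F G s).mulVec b)
    (hy : ∀ k, y (k + 1) = (twoStageT F G V s).mulVec (y k) + (twoStageQ F G s).mulVec b)
    (h₁ : x 1 - x 0 ∈ K) (h₂ : y 0 - y 1 ∈ K)
    (h₃ : y 0 - A⁻¹.mulVec b ∈ K) (h₄ : A⁻¹.mulVec b - x 0 ∈ K) :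
    (∀ k, y k - y (k + 1) ∈ K ∧ y (k + 1) - x (k + 1) ∈ K ∧ x (k + 1) - x k ∈ K) ∧
    Filter.Tendsto x Filter.atTop (nhds (A⁻¹.mulVec b)) ∧
    Filter.Tendsto y Filter.atTop (nhds (A⁻¹.mulVec b)) ∧
    (∀ k, y (k + 1) - A⁻¹.mulVec b ∈ K ∧ A⁻¹.mulVec b - x (k + 1) ∈ K) :=
  stmt_17_general K hK A U V F G hAnonneg hmono houter hinner s hs b x y hx hy h₁ h₂ h₃ h₄
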